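/- (Conservativeness of the ε-mollified safety probability.) Assume C_ε := { x ∈ C : dist(x, Cᶜ) ≥ ε } is nonempty. Then for every sample path ω, Σ_{k=0}^∞ r_ε(S_k(ω)) ≤ Σ_{k=0}^∞ r(S_k(ω)), and consequently the mollified value is a lower bound for the safety probability: E[ Σ_{k=0}^∞ r_ε(S_k) ] ≤ P( X_k ∈ C for all k ∈ {0, …, N} ). -/

import Mathlib

/-!
Since `0 ≤ l_ε ≤ 1`, the mollified reward is dominated by the reward termwise. Until the
augmented trajectory is absorbed, its clock is `h_k = τ - kΔt` and `x_0, …, x_k` all lie in `C`;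
so a step can only be rewarded when `h_k ∈ [0, Δt)`, i.e. `k = ⌊τ/Δt⌋₊ = N`, and then only if
`x_0, …, x_N ∈ C`. Hence the return of every path is at most the indicator of the safety event,
and the Bochner integral of the return is at most the lower Lebesgue integral of that
indicator, which is at most the probability of the safety event.
-/

open scoped Classical

/-- A pair `(h, y)` is absorbing iff `h < 0` or `y ∉ C`. -/
def IsAbsorbing {𝒳 : Type*} (C : Set 𝒳) (s : ℝ × 𝒳) : Prop :=
  s.1 < 0 ∨ s.2 ∉ C

/-- Reward: `1` if `0 ≤ h < Δt` and `(h, y)` is not absorbing, else `0`. -/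
noncomputable def reward {𝒳 : Type*} (C : Set 𝒳) (Δt : ℝ) (s : ℝ × 𝒳) : ℝ :=
  if 0 ≤ s.1 ∧ s.1 < Δt ∧ ¬ IsAbsorbing C s then 1 else 0

/-- The augmented trajectory built from a realized trajectory `x`. -/
noncomputable def augTraj {𝒳 : Type*} (C : Set 𝒳) (Δt τ : ℝ) (x : ℕ → 𝒳) : ℕ → ℝ × 𝒳
  | 0 => (τ, x 0)
  | k + 1 =>
      if IsAbsorbing C (augTraj C Δt τ x k) then augTraj C Δt τ x k
      else ((augTraj C Δt τ x k).1 - Δt, x (k + 1))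

open Metric

/-- The shrunk safe set `C_ε = {x ∈ C : dist(x, Cᶜ) ≥ ε}`. -/
def shrunkSet {𝒳 : Type*} [MetricSpace 𝒳] (C : Set 𝒳) (ε : ℝ) : Set 𝒳 :=
  {x ∈ C | ε ≤ infDist x Cᶜ}

/-- The mollified payoff `l_ε(x) = max{1 - dist(x, C_ε)/ε, 0}`. -/
noncomputable def molPayoff {𝒳 : Type*} [MetricSpace 𝒳] (C : Set 𝒳) (ε : ℝ) (x : 𝒳) : ℝ :=
  max (1 - infDist x (shrunkSet C ε) / ε) 0

/-- The ε-mollified reward `r_ε(h,y) = 𝟙[0 ≤ h < Δt]·𝟙[(h,y) not absorbing]·l_ε(y)`. -/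
noncomputable def rewardEps {𝒳 : Type*} [MetricSpace 𝒳] (C : Set 𝒳) (Δt ε : ℝ)
    (s : ℝ × 𝒳) : ℝ :=
  (if 0 ≤ s.1 ∧ s.1 < Δt then (1 : ℝ) else 0) *
    (if ¬ IsAbsorbing C s then (1 : ℝ) else 0) * molPayoff C ε s.2

open MeasureTheory

theorem Nat.floor_div_eq_of_sub_mul_mem_Ico {τ Δt : ℝ} {k : ℕ}
    (h : τ - k * Δt ∈ Set.Ico 0 Δt) : ⌊τ / Δt⌋₊ = k := by
  obtain ⟨h0, h1⟩ := h
  have hΔt : 0 < Δt := by linarith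
  have hτ : 0 ≤ τ := by linarith [mul_nonneg k.cast_nonneg hΔt.le]
  rw [Nat.floor_eq_iff (div_nonneg hτ hΔt.le), le_div_iff₀ hΔt, div_lt_iff₀ hΔt]
  constructor <;> linarith

theorem integral_le_measure_toReal_of_le_indicator {α : Type*} [MeasurableSpace α]
    {μ : Measure α} [IsFiniteMeasure μ] {f : α → ℝ} {s : Set α}
    (hf₀ : ∀ a, 0 ≤ f a) (hfs : ∀ a, f a ≤ s.indicator 1 a) :
    ∫ a, f a ∂μ ≤ (μ s).toReal := by
  have hle : ∀ a, ENNReal.ofReal ‖f a‖ ≤ s.indicator 1 a := fun a => by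
    by_cases ha : a ∈ s
    · simpa [Real.norm_of_nonneg (hf₀ a), Set.indicator_of_mem ha] using hfs a
    · have hf := hfs a
      rw [Set.indicator_of_notMem ha] at hf
      simp [le_antisymm hf (hf₀ a), Set.indicator_of_notMem ha]
  calc ∫ a, f a ∂μ ≤ ‖∫ a, f a ∂μ‖ := Real.le_norm_self _
    _ ≤ (∫⁻ a, ENNReal.ofReal ‖f a‖ ∂μ).toReal := norm_integral_le_lintegral_norm f
    _ ≤ (∫⁻ a, s.indicator 1 a ∂μ).toReal :=
      ENNReal.toReal_mono ((lintegral_indicator_one_le s).trans_lt (measure_lt_top μ s)).ne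
        (lintegral_mono hle)
    _ ≤ (μ s).toReal := ENNReal.toReal_mono (measure_ne_top μ s) (lintegral_indicator_one_le s)

section Rewards

variable {𝒳 : Type*}

theorem reward_le_one (C : Set 𝒳) (Δt : ℝ) (s : ℝ × 𝒳) : reward C Δt s ≤ 1 := by
  unfold reward; split_ifs <;> norm_num

variable [MetricSpace 𝒳] {C : Set 𝒳} {ε : ℝ}

theorem molPayoff_nonneg (x : 𝒳) : 0 ≤ molPayoff C ε x := le_max_right _ _

theorem molPayoff_le_one (hε : 0 ≤ ε) (x : 𝒳) : molPayoff C ε x ≤ 1 :=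
  max_le (by linarith [div_nonneg (infDist_nonneg (x := x) (s := shrunkSet C ε)) hε])
    zero_le_one

theorem rewardEps_nonneg (Δt : ℝ) (s : ℝ × 𝒳) : 0 ≤ rewardEps C Δt ε s := by
  unfold rewardEps
  exact mul_nonneg (mul_nonneg (by split_ifs <;> norm_num) (by split_ifs <;> norm_num))
    (molPayoff_nonneg _)

theorem rewardEps_le_reward (hε : 0 ≤ ε) (Δt : ℝ) (s : ℝ × 𝒳) :
    rewardEps C Δt ε s ≤ reward C Δt s := by
  have h₁ := molPayoff_le_one (C := C) hε s.2
  unfold rewardEps reward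
  split_ifs <;> simp_all

theorem tsum_rewardEps_le_tsum_reward (hε : 0 ≤ ε) {Δt : ℝ} {s : ℕ → ℝ × 𝒳}
    (hs : Summable fun k => reward C Δt (s k)) :
    ∑' k, rewardEps C Δt ε (s k) ≤ ∑' k, reward C Δt (s k) :=
  have hle := fun k => rewardEps_le_reward hε Δt (s k)
  (hs.of_nonneg_of_le (fun k => rewardEps_nonneg Δt (s k)) hle).tsum_le_tsum hle hs

end Rewards

section AugTraj

variable {𝒳 : Type*} {C : Set 𝒳} {Δt τ : ℝ} {x : ℕ → 𝒳} {k : ℕ}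

theorem isAbsorbing_augTraj_succ (h : IsAbsorbing C (augTraj C Δt τ x k)) :
    IsAbsorbing C (augTraj C Δt τ x (k + 1)) := by
  rwa [augTraj, if_pos h]

theorem augTraj_succ_of_not_isAbsorbing (h : ¬ IsAbsorbing C (augTraj C Δt τ x k)) :
    augTraj C Δt τ x (k + 1) = ((augTraj C Δt τ x k).1 - Δt, x (k + 1)) := by
  rw [augTraj, if_neg h]

theorem augTraj_of_not_isAbsorbing (h : ¬ IsAbsorbing C (augTraj C Δt τ x k)) :
    augTraj C Δt τ x k = (τ - k * Δt, x k) ∧ ∀ j ≤ k, x j ∈ C := by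
  induction k with
  | zero =>
    have hx₀ : x 0 ∈ C := by simpa [IsAbsorbing, augTraj] using (not_or.1 h).2
    exact ⟨by simp [augTraj], fun j hj => by rwa [Nat.le_zero.1 hj]⟩
  | succ k ih =>
    have hk : ¬ IsAbsorbing C (augTraj C Δt τ x k) := fun hk => h (isAbsorbing_augTraj_succ hk)
    obtain ⟨heq, hmem⟩ := ih hk
    have heq' : augTraj C Δt τ x (k + 1) = (τ - ↑(k + 1) * Δt, x (k + 1)) := by
      rw [augTraj_succ_of_not_isAbsorbing hk, heq]
      push_cast
      ring_nf
    have hx : x (k + 1) ∈ C := by simpa [IsAbsorbing, heq'] using (not_or.1 h).2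
    exact ⟨heq', fun j hj => (Nat.le_succ_iff.1 hj).elim (hmem j) (· ▸ hx)⟩

theorem eq_floor_and_forall_mem_of_reward_augTraj_ne_zero
    (h : reward C Δt (augTraj C Δt τ x k) ≠ 0) :
    k = ⌊τ / Δt⌋₊ ∧ ∀ j ≤ k, x j ∈ C := by
  unfold reward at h
  split_ifs at h with hr
  · obtain ⟨h₀, h₁, hna⟩ := hr
    obtain ⟨heq, hmem⟩ := augTraj_of_not_isAbsorbing hna
    rw [heq] at h₀ h₁
    exact ⟨(Nat.floor_div_eq_of_sub_mul_mem_Ico ⟨h₀, h₁⟩).symm, hmem⟩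
  · exact absurd rfl h

theorem reward_augTraj_eq_zero_of_ne_floor (hk : k ≠ ⌊τ / Δt⌋₊) :
    reward C Δt (augTraj C Δt τ x k) = 0 := by
  by_contra h
  exact hk (eq_floor_and_forall_mem_of_reward_augTraj_ne_zero h).1

theorem summable_reward_augTraj : Summable fun k => reward C Δt (augTraj C Δt τ x k) :=
  summable_of_ne_finset_zero (s := {⌊τ / Δt⌋₊}) fun _ hk =>
    reward_augTraj_eq_zero_of_ne_floor (Finset.notMem_singleton.1 hk)

theorem tsum_reward_augTraj_le :
    ∑' k, reward C Δt (augTraj C Δt τ x k) ≤ if ∀ j ≤ ⌊τ / Δt⌋₊, x j ∈ C then 1 else 0 := by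
  rw [tsum_eq_single ⌊τ / Δt⌋₊ fun _ hk => reward_augTraj_eq_zero_of_ne_floor hk]
  split_ifs with hsafe
  · exact reward_le_one C Δt _
  · refine le_of_eq (by_contra fun h => hsafe ?_)
    exact (eq_floor_and_forall_mem_of_reward_augTraj_ne_zero h).2

end AugTraj

theorem stmt_13_general {Ω : Type*} [MeasurableSpace Ω] (P : Measure Ω) [IsProbabilityMeasure P]
    {𝒳 : Type*} [MetricSpace 𝒳]
    (X : ℕ → Ω → 𝒳)
    (C : Set 𝒳) (Δt τ ε : ℝ)
    (hε : 0 < ε) :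
    (∀ ω : Ω, ∑' k : ℕ, rewardEps C Δt ε (augTraj C Δt τ (fun n => X n ω) k) ≤
        ∑' k : ℕ, reward C Δt (augTraj C Δt τ (fun n => X n ω) k)) ∧
    ∫ ω, (∑' k : ℕ, rewardEps C Δt ε (augTraj C Δt τ (fun n => X n ω) k)) ∂P ≤
      (P {ω | ∀ k ≤ ⌊τ / Δt⌋₊, X k ω ∈ C}).toReal := by
  have hpath : ∀ ω, ∑' k, rewardEps C Δt ε (augTraj C Δt τ (fun n => X n ω) k) ≤
      ∑' k, reward C Δt (augTraj C Δt τ (fun n => X n ω) k) :=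
    fun _ => tsum_rewardEps_le_tsum_reward hε.le summable_reward_augTraj
  refine ⟨hpath, integral_le_measure_toReal_of_le_indicator
    (fun _ => tsum_nonneg fun _ => rewardEps_nonneg Δt _) fun ω => ?_⟩
  calc _ ≤ _ := hpath ω
    _ ≤ if ∀ k ≤ ⌊τ / Δt⌋₊, X k ω ∈ C then 1 else 0 := tsum_reward_augTraj_le
    _ = _ := by simp only [Set.indicator_apply, Set.mem_ofPred_eq, Pi.one_apply]

/-- conservativeness of the ε-mollified safety probability:
if `C_ε ≠ ∅` then pathwise the mollified return is bounded by the return, and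
the mollified value is a lower bound for the safety probability. -/
theorem stmt_13 {Ω : Type*} [MeasurableSpace Ω] (P : Measure Ω) [IsProbabilityMeasure P]
    {𝒳 : Type*} [MetricSpace 𝒳] [MeasurableSpace 𝒳] [BorelSpace 𝒳]
    (X : ℕ → Ω → 𝒳) (hX : ∀ k, Measurable (X k))
    (C : Set 𝒳) (hC : MeasurableSet C) (Δt τ ε : ℝ)
    (hΔt : 0 < Δt) (hτ : 0 ≤ τ) (hε : 0 < ε)
    (hne : (shrunkSet C ε).Nonempty) :
    (∀ ω : Ω, ∑' k : ℕ, rewardEps C Δt ε (augTraj C Δt τ (fun n => X n ω) k) ≤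
        ∑' k : ℕ, reward C Δt (augTraj C Δt τ (fun n => X n ω) k)) ∧
    ∫ ω, (∑' k : ℕ, rewardEps C Δt ε (augTraj C Δt τ (fun n => X n ω) k)) ∂P ≤
      (P {ω | ∀ k ≤ ⌊τ / Δt⌋₊, X k ω ∈ C}).toReal :=
  stmt_13_general P X C Δt τ ε hε
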